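/- arXiv:2309.05335 — 9 statements merged into one kernel-verified Lean document; each statement's English description precedes it below -/
import Mathlib

section
/- The tensor R_{abcd} built from the matrices f₊₊, f₊₋, f₋₊, f₋₋ satisfies the first Bianchi identity R_{abcd} + R_{acdb} + R_{adbc} = 0 for all a,b,c,d ∈ {1,2,3,4} if and only if f₊₊ and f₋₋ are symmetric matrices, f₊₋ is the transpose of f₋₊, and trace(f₊₊) = trace(f₋₋). -/
noncomputable section

open Matrix

/-- Three-index Levi-Civita symbol on `Fin 3` (ε₁₂₃ = 1, zero-indexed as ε₀₁₂ = 1). -/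
def eps3 (i j k : Fin 3) : ℝ :=
  ((j : ℝ) - (i : ℝ)) * ((k : ℝ) - (i : ℝ)) * ((k : ℝ) - (j : ℝ)) / 2

/-- Four-index Levi-Civita symbol on `Fin 4` (ε₁₂₃₄ = 1, zero-indexed as ε₀₁₂₃ = 1). -/
def eps4 (a b c d : Fin 4) : ℝ :=
  ((b : ℝ) - (a : ℝ)) * ((c : ℝ) - (a : ℝ)) * ((d : ℝ) - (a : ℝ)) *
    ((c : ℝ) - (b : ℝ)) * ((d : ℝ) - (b : ℝ)) * ((d : ℝ) - (c : ℝ)) / 12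

/-- 't Hooft symbol η^i_{ab}: η^i_{jk} = ε_{ijk}, η^i_{j4} = δ_{ij}, η^i_{4j} = -δ_{ij},
η^i_{44} = 0 (the index `4` of the paper is the index `3 : Fin 4` here). -/
def tHooft (i : Fin 3) (a b : Fin 4) : ℝ :=
  if ha : (a : ℕ) < 3 then
    if hb : (b : ℕ) < 3 then eps3 i ⟨a, ha⟩ ⟨b, hb⟩
    else if (a : ℕ) = (i : ℕ) then 1 else 0
  else
    if (b : ℕ) < 3 then (if (b : ℕ) = (i : ℕ) then -1 else 0)
    else 0

/-- 't Hooft symbol η̄^i_{ab}: η̄^i_{jk} = ε_{ijk}, η̄^i_{j4} = -δ_{ij}, η̄^i_{4j} = δ_{ij},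
η̄^i_{44} = 0. -/
def tHooftBar (i : Fin 3) (a b : Fin 4) : ℝ :=
  if ha : (a : ℕ) < 3 then
    if hb : (b : ℕ) < 3 then eps3 i ⟨a, ha⟩ ⟨b, hb⟩
    else if (a : ℕ) = (i : ℕ) then -1 else 0
  else
    if (b : ℕ) < 3 then (if (b : ℕ) = (i : ℕ) then 1 else 0)
    else 0

/-- The curvature-type tensor built from 3×3 matrices f₊₊, f₊₋, f₋₊, f₋₋ via the
't Hooft symbols. -/
def Riem (fpp fpm fmp fmm : Matrix (Fin 3) (Fin 3) ℝ) (a b c d : Fin 4) : ℝ :=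
  ∑ i : Fin 3, ∑ j : Fin 3,
    (fpp i j * tHooft i a b * tHooft j c d
      + fpm i j * tHooft i a b * tHooftBar j c d
      + fmp i j * tHooftBar i a b * tHooft j c d
      + fmm i j * tHooftBar i a b * tHooftBar j c d)


def kT : Fin 4 → Fin 4 → Fin 3 :=
  ![![0, 2, 1, 0], ![2, 0, 0, 1], ![1, 0, 0, 2], ![0, 1, 2, 0]]

def spT : Fin 4 → Fin 4 → ℝ :=
  ![![0, 1, -1, 1], ![-1, 0, 1, 1], ![1, -1, 0, 1], ![-1, -1, -1, 0]]

def smT : Fin 4 → Fin 4 → ℝ :=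
  ![![0, 1, -1, -1], ![-1, 0, 1, -1], ![1, -1, 0, -1], ![1, 1, 1, 0]]

lemma tHooft_ite (i : Fin 3) (a b : Fin 4) :
    tHooft i a b = if i = kT a b then spT a b else 0 := by
  fin_cases i <;> fin_cases a <;> fin_cases b <;>
    norm_num [tHooft, eps3, kT, spT, Fin.ext_iff]

lemma tHooftBar_ite (i : Fin 3) (a b : Fin 4) :
    tHooftBar i a b = if i = kT a b then smT a b else 0 := by
  fin_cases i <;> fin_cases a <;> fin_cases b <;>
    norm_num [tHooftBar, eps3, kT, smT, Fin.ext_iff]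

lemma Riem_eval (fpp fpm fmp fmm : Matrix (Fin 3) (Fin 3) ℝ) (a b c d : Fin 4) :
    Riem fpp fpm fmp fmm a b c d =
      spT a b * spT c d * fpp (kT a b) (kT c d)
      + spT a b * smT c d * fpm (kT a b) (kT c d)
      + smT a b * spT c d * fmp (kT a b) (kT c d)
      + smT a b * smT c d * fmm (kT a b) (kT c d) := by
  simp only [Riem, tHooft_ite, tHooftBar_ite, ite_mul, mul_ite, mul_zero, zero_mul,
    Finset.sum_add_distrib, Finset.sum_ite_eq', Finset.mem_univ, if_true]
  ring

lemma K00 : kT 0 0 = 0 := rfl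
lemma P00 : spT 0 0 = 0 := rfl
lemma M00 : smT 0 0 = 0 := rfl
lemma K01 : kT 0 1 = 2 := rfl
lemma P01 : spT 0 1 = 1 := rfl
lemma M01 : smT 0 1 = 1 := rfl
lemma K02 : kT 0 2 = 1 := rfl
lemma P02 : spT 0 2 = -1 := rfl
lemma M02 : smT 0 2 = -1 := rfl
lemma K03 : kT 0 3 = 0 := rfl
lemma P03 : spT 0 3 = 1 := rfl
lemma M03 : smT 0 3 = -1 := rfl
lemma K10 : kT 1 0 = 2 := rfl
lemma P10 : spT 1 0 = -1 := rfl
lemma M10 : smT 1 0 = -1 := rfl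
lemma K11 : kT 1 1 = 0 := rfl
lemma P11 : spT 1 1 = 0 := rfl
lemma M11 : smT 1 1 = 0 := rfl
lemma K12 : kT 1 2 = 0 := rfl
lemma P12 : spT 1 2 = 1 := rfl
lemma M12 : smT 1 2 = 1 := rfl
lemma K13 : kT 1 3 = 1 := rfl
lemma P13 : spT 1 3 = 1 := rfl
lemma M13 : smT 1 3 = -1 := rfl
lemma K20 : kT 2 0 = 1 := rfl
lemma P20 : spT 2 0 = 1 := rfl
lemma M20 : smT 2 0 = 1 := rfl
lemma K21 : kT 2 1 = 0 := rfl
lemma P21 : spT 2 1 = -1 := rfl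
lemma M21 : smT 2 1 = -1 := rfl
lemma K22 : kT 2 2 = 0 := rfl
lemma P22 : spT 2 2 = 0 := rfl
lemma M22 : smT 2 2 = 0 := rfl
lemma K23 : kT 2 3 = 2 := rfl
lemma P23 : spT 2 3 = 1 := rfl
lemma M23 : smT 2 3 = -1 := rfl
lemma K30 : kT 3 0 = 0 := rfl
lemma P30 : spT 3 0 = -1 := rfl
lemma M30 : smT 3 0 = 1 := rfl
lemma K31 : kT 3 1 = 1 := rfl
lemma P31 : spT 3 1 = -1 := rfl
lemma M31 : smT 3 1 = 1 := rfl
lemma K32 : kT 3 2 = 2 := rfl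
lemma P32 : spT 3 2 = -1 := rfl
lemma M32 : smT 3 2 = 1 := rfl
lemma K33 : kT 3 3 = 0 := rfl
lemma P33 : spT 3 3 = 0 := rfl
lemma M33 : smT 3 3 = 0 := rfl

set_option maxHeartbeats 2000000 in
/-- The first Bianchi identity holds iff f₊₊, f₋₋ are symmetric, f₊₋ = f₋₊ᵀ, and
trace f₊₊ = trace f₋₋. -/
theorem bianchi_iff (fpp fpm fmp fmm : Matrix (Fin 3) (Fin 3) ℝ) :
    (∀ a b c d : Fin 4,
      Riem fpp fpm fmp fmm a b c d + Riem fpp fpm fmp fmm a c d b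
        + Riem fpp fpm fmp fmm a d b c = 0) ↔
    (fpp.IsSymm ∧ fmm.IsSymm ∧ fpm = fmpᵀ ∧ fpp.trace = fmm.trace) := by
  constructor
  · intro h
    have h0 := h 0 0 2 3
    simp only [Riem_eval, K00, P00, M00, K01, P01, M01, K02, P02, M02, K03, P03, M03, K10, P10, M10, K11, P11, M11, K12, P12, M12, K13, P13, M13, K20, P20, M20, K21, P21, M21, K22, P22, M22, K23, P23, M23, K30, P30, M30, K31, P31, M31, K32, P32, M32, K33, P33, M33] at h0
    have h1 := h 1 1 2 3
    simp only [Riem_eval, K00, P00, M00, K01, P01, M01, K02, P02, M02, K03, P03, M03, K10, P10, M10, K11, P11, M11, K12, P12, M12, K13, P13, M13, K20, P20, M20, K21, P21, M21, K22, P22, M22, K23, P23, M23, K30, P30, M30, K31, P31, M31, K32, P32, M32, K33, P33, M33] at h1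
    have h2 := h 2 0 1 2
    simp only [Riem_eval, K00, P00, M00, K01, P01, M01, K02, P02, M02, K03, P03, M03, K10, P10, M10, K11, P11, M11, K12, P12, M12, K13, P13, M13, K20, P20, M20, K21, P21, M21, K22, P22, M22, K23, P23, M23, K30, P30, M30, K31, P31, M31, K32, P32, M32, K33, P33, M33] at h2
    have h3 := h 3 0 1 3
    simp only [Riem_eval, K00, P00, M00, K01, P01, M01, K02, P02, M02, K03, P03, M03, K10, P10, M10, K11, P11, M11, K12, P12, M12, K13, P13, M13, K20, P20, M20, K21, P21, M21, K22, P22, M22, K23, P23, M23, K30, P30, M30, K31, P31, M31, K32, P32, M32, K33, P33, M33] at h3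
    have h4 := h 0 0 1 3
    simp only [Riem_eval, K00, P00, M00, K01, P01, M01, K02, P02, M02, K03, P03, M03, K10, P10, M10, K11, P11, M11, K12, P12, M12, K13, P13, M13, K20, P20, M20, K21, P21, M21, K22, P22, M22, K23, P23, M23, K30, P30, M30, K31, P31, M31, K32, P32, M32, K33, P33, M33] at h4
    have h5 := h 1 0 1 2
    simp only [Riem_eval, K00, P00, M00, K01, P01, M01, K02, P02, M02, K03, P03, M03, K10, P10, M10, K11, P11, M11, K12, P12, M12, K13, P13, M13, K20, P20, M20, K21, P21, M21, K22, P22, M22, K23, P23, M23, K30, P30, M30, K31, P31, M31, K32, P32, M32, K33, P33, M33] at h5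
    have h6 := h 2 1 2 3
    simp only [Riem_eval, K00, P00, M00, K01, P01, M01, K02, P02, M02, K03, P03, M03, K10, P10, M10, K11, P11, M11, K12, P12, M12, K13, P13, M13, K20, P20, M20, K21, P21, M21, K22, P22, M22, K23, P23, M23, K30, P30, M30, K31, P31, M31, K32, P32, M32, K33, P33, M33] at h6
    have h7 := h 3 0 2 3
    simp only [Riem_eval, K00, P00, M00, K01, P01, M01, K02, P02, M02, K03, P03, M03, K10, P10, M10, K11, P11, M11, K12, P12, M12, K13, P13, M13, K20, P20, M20, K21, P21, M21, K22, P22, M22, K23, P23, M23, K30, P30, M30, K31, P31, M31, K32, P32, M32, K33, P33, M33] at h7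
    have h8 := h 0 0 2 1
    simp only [Riem_eval, K00, P00, M00, K01, P01, M01, K02, P02, M02, K03, P03, M03, K10, P10, M10, K11, P11, M11, K12, P12, M12, K13, P13, M13, K20, P20, M20, K21, P21, M21, K22, P22, M22, K23, P23, M23, K30, P30, M30, K31, P31, M31, K32, P32, M32, K33, P33, M33] at h8
    have h9 := h 1 0 1 3
    simp only [Riem_eval, K00, P00, M00, K01, P01, M01, K02, P02, M02, K03, P03, M03, K10, P10, M10, K11, P11, M11, K12, P12, M12, K13, P13, M13, K20, P20, M20, K21, P21, M21, K22, P22, M22, K23, P23, M23, K30, P30, M30, K31, P31, M31, K32, P32, M32, K33, P33, M33] at h9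
    have h10 := h 2 0 2 3
    simp only [Riem_eval, K00, P00, M00, K01, P01, M01, K02, P02, M02, K03, P03, M03, K10, P10, M10, K11, P11, M11, K12, P12, M12, K13, P13, M13, K20, P20, M20, K21, P21, M21, K22, P22, M22, K23, P23, M23, K30, P30, M30, K31, P31, M31, K32, P32, M32, K33, P33, M33] at h10
    have h11 := h 3 1 2 3
    simp only [Riem_eval, K00, P00, M00, K01, P01, M01, K02, P02, M02, K03, P03, M03, K10, P10, M10, K11, P11, M11, K12, P12, M12, K13, P13, M13, K20, P20, M20, K21, P21, M21, K22, P22, M22, K23, P23, M23, K30, P30, M30, K31, P31, M31, K32, P32, M32, K33, P33, M33] at h11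
    have h12 := h 0 1 2 3
    simp only [Riem_eval, K00, P00, M00, K01, P01, M01, K02, P02, M02, K03, P03, M03, K10, P10, M10, K11, P11, M11, K12, P12, M12, K13, P13, M13, K20, P20, M20, K21, P21, M21, K22, P22, M22, K23, P23, M23, K30, P30, M30, K31, P31, M31, K32, P32, M32, K33, P33, M33] at h12
    have h13 := h 1 0 2 3
    simp only [Riem_eval, K00, P00, M00, K01, P01, M01, K02, P02, M02, K03, P03, M03, K10, P10, M10, K11, P11, M11, K12, P12, M12, K13, P13, M13, K20, P20, M20, K21, P21, M21, K22, P22, M22, K23, P23, M23, K30, P30, M30, K31, P31, M31, K32, P32, M32, K33, P33, M33] at h13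
    have h14 := h 2 0 1 3
    simp only [Riem_eval, K00, P00, M00, K01, P01, M01, K02, P02, M02, K03, P03, M03, K10, P10, M10, K11, P11, M11, K12, P12, M12, K13, P13, M13, K20, P20, M20, K21, P21, M21, K22, P22, M22, K23, P23, M23, K30, P30, M30, K31, P31, M31, K32, P32, M32, K33, P33, M33] at h14
    have h15 := h 3 0 1 2
    simp only [Riem_eval, K00, P00, M00, K01, P01, M01, K02, P02, M02, K03, P03, M03, K10, P10, M10, K11, P11, M11, K12, P12, M12, K13, P13, M13, K20, P20, M20, K21, P21, M21, K22, P22, M22, K23, P23, M23, K30, P30, M30, K31, P31, M31, K32, P32, M32, K33, P33, M33] at h15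
    refine ⟨?_, ?_, ?_, ?_⟩
    · ext i j
      fin_cases i <;> fin_cases j <;>
        simp only [Matrix.transpose_apply, Fin.zero_eta, Fin.mk_one, Fin.reduceFinMk] <;>
        linarith
    · ext i j
      fin_cases i <;> fin_cases j <;>
        simp only [Matrix.transpose_apply, Fin.zero_eta, Fin.mk_one, Fin.reduceFinMk] <;>
        linarith
    · ext i j
      fin_cases i <;> fin_cases j <;>
        simp only [Matrix.transpose_apply, Fin.zero_eta, Fin.mk_one, Fin.reduceFinMk] <;>
        linarith
    · simp only [Matrix.trace, Matrix.diag, Fin.sum_univ_three]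
      linarith
  · rintro ⟨h1, h2, h3, h4⟩ a b c d
    have q00 : fpm 0 0 = fmp 0 0 := by rw [h3]; rfl
    have p01 : fpp 1 0 = fpp 0 1 := h1.apply 0 1
    have m01 : fmm 1 0 = fmm 0 1 := h2.apply 0 1
    have q01 : fpm 0 1 = fmp 1 0 := by rw [h3]; rfl
    have p02 : fpp 2 0 = fpp 0 2 := h1.apply 0 2
    have m02 : fmm 2 0 = fmm 0 2 := h2.apply 0 2
    have q02 : fpm 0 2 = fmp 2 0 := by rw [h3]; rfl
    have q10 : fpm 1 0 = fmp 0 1 := by rw [h3]; rfl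
    have q11 : fpm 1 1 = fmp 1 1 := by rw [h3]; rfl
    have p12 : fpp 2 1 = fpp 1 2 := h1.apply 1 2
    have m12 : fmm 2 1 = fmm 1 2 := h2.apply 1 2
    have q12 : fpm 1 2 = fmp 2 1 := by rw [h3]; rfl
    have q20 : fpm 2 0 = fmp 0 2 := by rw [h3]; rfl
    have q21 : fpm 2 1 = fmp 1 2 := by rw [h3]; rfl
    have q22 : fpm 2 2 = fmp 2 2 := by rw [h3]; rfl
    have tr : fpp 0 0 + fpp 1 1 + fpp 2 2 = fmm 0 0 + fmm 1 1 + fmm 2 2 := by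
      simpa [Matrix.trace, Matrix.diag, Fin.sum_univ_three] using h4
    simp only [Riem_eval]
    fin_cases a <;> fin_cases b <;> fin_cases c <;> fin_cases d <;>
      simp only [Fin.zero_eta, Fin.mk_one, Fin.reduceFinMk, K00, P00, M00, K01, P01, M01, K02, P02, M02, K03, P03, M03, K10, P10, M10, K11, P11, M11, K12, P12, M12, K13, P13, M13, K20, P20, M20, K21, P21, M21, K22, P22, M22, K23, P23, M23, K30, P30, M30, K31, P31, M31, K32, P32, M32, K33, P33, M33] <;>
      linarith
end
end

section
/- Assume f₊₊ and f₋₋ are symmetric and f₊₋ is the transpose of f₋₊. Then the Ricci contraction of the tensor R_{abcd} satisfies, for all a,b ∈ {1,2,3,4}, Σ_{c=1}^{4} R_{acbc} = (trace(f₊₊) + trace(f₋₋)) δ_{ab} + 2 Σ_{i,j=1}^{3} f₊₋^{ij} Σ_{c=1}^{4} η^i_{ac} η̄^j_{bc}, and consequently the full contraction satisfies Σ_{a,c=1}^{4} R_{acac} = 4 (trace(f₊₊) + trace(f₋₋)). -/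
/-!
As 4×4 matrices, the 't Hooft symbols satisfy the quaternion relations
`η^i η^j + η^j η^i = -2 δ_ij` (and likewise for `η̄`), every `η^i` commutes with every `η̄^j`,
and `tr (η^i η̄^j) = 0`. Contracting `R_{acbc}` over `c` pairs a symmetric `f₊₊` or `f₋₋` with
`η^i (η^j)ᵀ`, so only the symmetrised product, hence `δ_ij δ_ab`, survives and yields the trace
terms; the two mixed terms agree because `η` and `η̄` commute, and they drop out of the full
contraction by the trace orthogonality.
-/

noncomputable section

open Matrix

open Finset

theorem Matrix.IsSymm.sum_sum_mul_eq_trace_mul {R n : Type*} [Field R] [CharZero R] [Fintype n]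
    [DecidableEq n] {f : Matrix n n R} (hf : f.IsSymm) {S : n → n → R} {c : R}
    (hS : ∀ i j, S i j + S j i = 2 * (if i = j then 1 else 0) * c) :
    ∑ i, ∑ j, f i j * S i j = f.trace * c := by
  have swap : ∑ i, ∑ j, f i j * S i j = ∑ i, ∑ j, f i j * S j i := by
    rw [sum_comm]; simp only [hf.apply]
  have double : 2 * ∑ i, ∑ j, f i j * S i j = 2 * (f.trace * c) := by
    calc 2 * ∑ i, ∑ j, f i j * S i j = ∑ i, ∑ j, f i j * (S i j + S j i) := by
          rw [two_mul]; nth_rewrite 2 [swap]; simp only [mul_add, sum_add_distrib]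
      _ = 2 * (f.trace * c) := by
          simp only [hS, mul_ite, mul_one, mul_zero, ite_mul, zero_mul, sum_ite_eq, mem_univ,
            if_true, Matrix.trace, Matrix.diag]
          rw [← sum_mul]; ring
  exact mul_left_cancel₀ two_ne_zero double

lemma tHooft_eq : tHooft = ![!![0,0,0,1; 0,0,1,0; 0,-1,0,0; -1,0,0,0],
    !![0,0,-1,0; 0,0,0,1; 1,0,0,0; 0,-1,0,0],
    !![0,1,0,0; -1,0,0,0; 0,0,0,1; 0,0,-1,0]] := by
  funext i a b; fin_cases i <;> fin_cases a <;> fin_cases b <;> norm_num [tHooft, eps3]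

lemma tHooftBar_eq : tHooftBar = ![!![0,0,0,-1; 0,0,1,0; 0,-1,0,0; 1,0,0,0],
    !![0,0,-1,0; 0,0,0,-1; 1,0,0,0; 0,1,0,0],
    !![0,1,0,0; -1,0,0,0; 0,0,0,-1; 0,0,1,0]] := by
  funext i a b; fin_cases i <;> fin_cases a <;> fin_cases b <;> norm_num [tHooftBar, eps3]

lemma sum_tHooft_mul_tHooft_add_swap (i j : Fin 3) (a b : Fin 4) :
    ∑ c, tHooft i a c * tHooft j b c + ∑ c, tHooft j a c * tHooft i b c
      = 2 * (if i = j then 1 else 0) * (if a = b then 1 else 0) := by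
  rw [tHooft_eq]
  fin_cases i <;> fin_cases j <;> fin_cases a <;> fin_cases b <;>
    simp [Fin.sum_univ_four, one_add_one_eq_two]

lemma sum_tHooftBar_mul_tHooftBar_add_swap (i j : Fin 3) (a b : Fin 4) :
    ∑ c, tHooftBar i a c * tHooftBar j b c + ∑ c, tHooftBar j a c * tHooftBar i b c
      = 2 * (if i = j then 1 else 0) * (if a = b then 1 else 0) := by
  rw [tHooftBar_eq]
  fin_cases i <;> fin_cases j <;> fin_cases a <;> fin_cases b <;>
    simp [Fin.sum_univ_four, one_add_one_eq_two]

lemma sum_tHooft_mul_tHooftBar_comm (i j : Fin 3) (a b : Fin 4) :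
    ∑ c, tHooft i a c * tHooftBar j b c = ∑ c, tHooft i b c * tHooftBar j a c := by
  rw [tHooft_eq, tHooftBar_eq]
  fin_cases i <;> fin_cases j <;> fin_cases a <;> fin_cases b <;> simp [Fin.sum_univ_four]

lemma sum_sum_tHooft_mul_tHooftBar (i j : Fin 3) :
    ∑ a, ∑ c, tHooft i a c * tHooftBar j a c = 0 := by
  rw [tHooft_eq, tHooftBar_eq]
  fin_cases i <;> fin_cases j <;> simp [Fin.sum_univ_four]

lemma sum_sum_mul_sum_tHooftBar_mul_tHooft (f : Matrix (Fin 3) (Fin 3) ℝ) (a b : Fin 4) :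
    ∑ i, ∑ j, f i j * ∑ c, tHooftBar i a c * tHooft j b c
      = ∑ i, ∑ j, fᵀ i j * ∑ c, tHooft i a c * tHooftBar j b c := by
  rw [sum_comm]
  refine sum_congr rfl fun i _ => sum_congr rfl fun j _ => ?_
  rw [transpose_apply, sum_tHooft_mul_tHooftBar_comm]
  simp only [mul_comm]

lemma sum_Riem_apply_apply (fpp fpm fmp fmm : Matrix (Fin 3) (Fin 3) ℝ) (a b : Fin 4) :
    ∑ c, Riem fpp fpm fmp fmm a c b c =
      ∑ i, ∑ j, fpp i j * ∑ c, tHooft i a c * tHooft j b c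
      + ∑ i, ∑ j, fpm i j * ∑ c, tHooft i a c * tHooftBar j b c
      + ∑ i, ∑ j, fmp i j * ∑ c, tHooftBar i a c * tHooft j b c
      + ∑ i, ∑ j, fmm i j * ∑ c, tHooftBar i a c * tHooftBar j b c := by
  simp only [Riem, mul_sum, ← sum_add_distrib]
  rw [sum_comm]
  refine sum_congr rfl fun i _ => ?_
  rw [sum_comm]
  exact sum_congr rfl fun j _ => sum_congr rfl fun c _ => by ring

/-- The Ricci contraction of the curvature-type tensor, assuming f₊₊, f₋₋ symmetric and
f₊₋ = f₋₊ᵀ. -/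
theorem ricci_contraction (fpp fpm fmp fmm : Matrix (Fin 3) (Fin 3) ℝ)
    (hpp : fpp.IsSymm) (hmm : fmm.IsSymm) (hpm : fpm = fmpᵀ) :
    (∀ a b : Fin 4,
      ∑ c : Fin 4, Riem fpp fpm fmp fmm a c b c
        = (fpp.trace + fmm.trace) * (if a = b then 1 else 0)
          + 2 * ∑ i : Fin 3, ∑ j : Fin 3,
              fpm i j * ∑ c : Fin 4, tHooft i a c * tHooftBar j b c) ∧
    (∑ a : Fin 4, ∑ c : Fin 4, Riem fpp fpm fmp fmm a c a c
      = 4 * (fpp.trace + fmm.trace)) := by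
  have ricci : ∀ a b : Fin 4, ∑ c : Fin 4, Riem fpp fpm fmp fmm a c b c
      = (fpp.trace + fmm.trace) * (if a = b then 1 else 0)
        + 2 * ∑ i, ∑ j, fpm i j * ∑ c, tHooft i a c * tHooftBar j b c := by
    intro a b
    rw [sum_Riem_apply_apply,
      hpp.sum_sum_mul_eq_trace_mul (sum_tHooft_mul_tHooft_add_swap · · a b),
      hmm.sum_sum_mul_eq_trace_mul (sum_tHooftBar_mul_tHooftBar_add_swap · · a b),
      sum_sum_mul_sum_tHooftBar_mul_tHooft, ← hpm]
    ring
  refine ⟨ricci, ?_⟩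
  calc ∑ a, ∑ c, Riem fpp fpm fmp fmm a c a c
      = ∑ a, ((fpp.trace + fmm.trace)
          + 2 * ∑ i, ∑ j, fpm i j * ∑ c, tHooft i a c * tHooftBar j a c) :=
        sum_congr rfl fun a _ => by rw [ricci, if_pos rfl, mul_one]
    _ = 4 * (fpp.trace + fmm.trace)
          + 2 * ∑ i, ∑ j, fpm i j * ∑ a, ∑ c, tHooft i a c * tHooftBar j a c := by
        rw [sum_add_distrib, ← mul_sum, sum_const, card_univ, Fintype.card_fin, nsmul_eq_mul,
          Nat.cast_ofNat, sum_comm]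
        congr 2
        refine sum_congr rfl fun i _ => ?_
        rw [sum_comm]
        simp only [mul_sum]
    _ = 4 * (fpp.trace + fmm.trace) := by simp [sum_sum_tHooft_mul_tHooftBar]
end
end

section
/- Assume f₊₊ and f₋₋ are symmetric and f₊₋ is the transpose of f₋₊, and let λ ∈ ℝ. Then the Einstein condition Σ_{c=1}^{4} R_{acbc} = λ δ_{ab} for all a,b ∈ {1,2,3,4} holds if and only if f₊₋ = 0 (equivalently f₋₊ = 0) and λ = trace(f₊₊) + trace(f₋₋). -/
noncomputable section

open Matrix

lemma R00 (fpp fpm fmp fmm : Matrix (Fin 3) (Fin 3) ℝ) :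
    ∑ c : Fin 4, Riem fpp fpm fmp fmm 0 c 0 c = fpp 0 0 + fpp 1 1 + fpp 2 2 - fpm 0 0 + fpm 1 1 + fpm 2 2 - fmp 0 0 + fmp 1 1 + fmp 2 2 + fmm 0 0 + fmm 1 1 + fmm 2 2 := by
  simp [Riem, tHooft, tHooftBar, eps3, Fin.sum_univ_four, Fin.sum_univ_three,
    show ((3:Fin 4):ℕ) = 3 from rfl, show ((2:Fin 4):ℕ) = 2 from rfl,
    show ((1:Fin 4):ℕ) = 1 from rfl, show ((0:Fin 4):ℕ) = 0 from rfl,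
    show ((2:Fin 3):ℕ) = 2 from rfl, show ((1:Fin 3):ℕ) = 1 from rfl,
    show ((0:Fin 3):ℕ) = 0 from rfl]
  ring

lemma R01 (fpp fpm fmp fmm : Matrix (Fin 3) (Fin 3) ℝ) :
    ∑ c : Fin 4, Riem fpp fpm fmp fmm 0 c 1 c = fpp 0 1 - fpp 1 0 - fpm 0 1 - fpm 1 0 - fmp 0 1 - fmp 1 0 + fmm 0 1 - fmm 1 0 := by
  simp [Riem, tHooft, tHooftBar, eps3, Fin.sum_univ_four, Fin.sum_univ_three,
    show ((3:Fin 4):ℕ) = 3 from rfl, show ((2:Fin 4):ℕ) = 2 from rfl,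
    show ((1:Fin 4):ℕ) = 1 from rfl, show ((0:Fin 4):ℕ) = 0 from rfl,
    show ((2:Fin 3):ℕ) = 2 from rfl, show ((1:Fin 3):ℕ) = 1 from rfl,
    show ((0:Fin 3):ℕ) = 0 from rfl]
  ring

lemma R02 (fpp fpm fmp fmm : Matrix (Fin 3) (Fin 3) ℝ) :
    ∑ c : Fin 4, Riem fpp fpm fmp fmm 0 c 2 c = fpp 0 2 - fpp 2 0 - fpm 0 2 - fpm 2 0 - fmp 0 2 - fmp 2 0 + fmm 0 2 - fmm 2 0 := by
  simp [Riem, tHooft, tHooftBar, eps3, Fin.sum_univ_four, Fin.sum_univ_three,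
    show ((3:Fin 4):ℕ) = 3 from rfl, show ((2:Fin 4):ℕ) = 2 from rfl,
    show ((1:Fin 4):ℕ) = 1 from rfl, show ((0:Fin 4):ℕ) = 0 from rfl,
    show ((2:Fin 3):ℕ) = 2 from rfl, show ((1:Fin 3):ℕ) = 1 from rfl,
    show ((0:Fin 3):ℕ) = 0 from rfl]
  ring

lemma R03 (fpp fpm fmp fmm : Matrix (Fin 3) (Fin 3) ℝ) :
    ∑ c : Fin 4, Riem fpp fpm fmp fmm 0 c 3 c = fpp 1 2 - fpp 2 1 - fpm 1 2 + fpm 2 1 + fmp 1 2 - fmp 2 1 - fmm 1 2 + fmm 2 1 := by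
  simp [Riem, tHooft, tHooftBar, eps3, Fin.sum_univ_four, Fin.sum_univ_three,
    show ((3:Fin 4):ℕ) = 3 from rfl, show ((2:Fin 4):ℕ) = 2 from rfl,
    show ((1:Fin 4):ℕ) = 1 from rfl, show ((0:Fin 4):ℕ) = 0 from rfl,
    show ((2:Fin 3):ℕ) = 2 from rfl, show ((1:Fin 3):ℕ) = 1 from rfl,
    show ((0:Fin 3):ℕ) = 0 from rfl]
  ring

lemma R10 (fpp fpm fmp fmm : Matrix (Fin 3) (Fin 3) ℝ) :
    ∑ c : Fin 4, Riem fpp fpm fmp fmm 1 c 0 c = - fpp 0 1 + fpp 1 0 - fpm 0 1 - fpm 1 0 - fmp 0 1 - fmp 1 0 - fmm 0 1 + fmm 1 0 := by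
  simp [Riem, tHooft, tHooftBar, eps3, Fin.sum_univ_four, Fin.sum_univ_three,
    show ((3:Fin 4):ℕ) = 3 from rfl, show ((2:Fin 4):ℕ) = 2 from rfl,
    show ((1:Fin 4):ℕ) = 1 from rfl, show ((0:Fin 4):ℕ) = 0 from rfl,
    show ((2:Fin 3):ℕ) = 2 from rfl, show ((1:Fin 3):ℕ) = 1 from rfl,
    show ((0:Fin 3):ℕ) = 0 from rfl]
  ring

lemma R11 (fpp fpm fmp fmm : Matrix (Fin 3) (Fin 3) ℝ) :
    ∑ c : Fin 4, Riem fpp fpm fmp fmm 1 c 1 c = fpp 0 0 + fpp 1 1 + fpp 2 2 + fpm 0 0 - fpm 1 1 + fpm 2 2 + fmp 0 0 - fmp 1 1 + fmp 2 2 + fmm 0 0 + fmm 1 1 + fmm 2 2 := by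
  simp [Riem, tHooft, tHooftBar, eps3, Fin.sum_univ_four, Fin.sum_univ_three,
    show ((3:Fin 4):ℕ) = 3 from rfl, show ((2:Fin 4):ℕ) = 2 from rfl,
    show ((1:Fin 4):ℕ) = 1 from rfl, show ((0:Fin 4):ℕ) = 0 from rfl,
    show ((2:Fin 3):ℕ) = 2 from rfl, show ((1:Fin 3):ℕ) = 1 from rfl,
    show ((0:Fin 3):ℕ) = 0 from rfl]
  ring

lemma R12 (fpp fpm fmp fmm : Matrix (Fin 3) (Fin 3) ℝ) :
    ∑ c : Fin 4, Riem fpp fpm fmp fmm 1 c 2 c = fpp 1 2 - fpp 2 1 - fpm 1 2 - fpm 2 1 - fmp 1 2 - fmp 2 1 + fmm 1 2 - fmm 2 1 := by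
  simp [Riem, tHooft, tHooftBar, eps3, Fin.sum_univ_four, Fin.sum_univ_three,
    show ((3:Fin 4):ℕ) = 3 from rfl, show ((2:Fin 4):ℕ) = 2 from rfl,
    show ((1:Fin 4):ℕ) = 1 from rfl, show ((0:Fin 4):ℕ) = 0 from rfl,
    show ((2:Fin 3):ℕ) = 2 from rfl, show ((1:Fin 3):ℕ) = 1 from rfl,
    show ((0:Fin 3):ℕ) = 0 from rfl]
  ring

lemma R13 (fpp fpm fmp fmm : Matrix (Fin 3) (Fin 3) ℝ) :
    ∑ c : Fin 4, Riem fpp fpm fmp fmm 1 c 3 c = - fpp 0 2 + fpp 2 0 + fpm 0 2 - fpm 2 0 - fmp 0 2 + fmp 2 0 + fmm 0 2 - fmm 2 0 := by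
  simp [Riem, tHooft, tHooftBar, eps3, Fin.sum_univ_four, Fin.sum_univ_three,
    show ((3:Fin 4):ℕ) = 3 from rfl, show ((2:Fin 4):ℕ) = 2 from rfl,
    show ((1:Fin 4):ℕ) = 1 from rfl, show ((0:Fin 4):ℕ) = 0 from rfl,
    show ((2:Fin 3):ℕ) = 2 from rfl, show ((1:Fin 3):ℕ) = 1 from rfl,
    show ((0:Fin 3):ℕ) = 0 from rfl]
  ring

lemma R20 (fpp fpm fmp fmm : Matrix (Fin 3) (Fin 3) ℝ) :
    ∑ c : Fin 4, Riem fpp fpm fmp fmm 2 c 0 c = - fpp 0 2 + fpp 2 0 - fpm 0 2 - fpm 2 0 - fmp 0 2 - fmp 2 0 - fmm 0 2 + fmm 2 0 := by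
  simp [Riem, tHooft, tHooftBar, eps3, Fin.sum_univ_four, Fin.sum_univ_three,
    show ((3:Fin 4):ℕ) = 3 from rfl, show ((2:Fin 4):ℕ) = 2 from rfl,
    show ((1:Fin 4):ℕ) = 1 from rfl, show ((0:Fin 4):ℕ) = 0 from rfl,
    show ((2:Fin 3):ℕ) = 2 from rfl, show ((1:Fin 3):ℕ) = 1 from rfl,
    show ((0:Fin 3):ℕ) = 0 from rfl]
  ring

lemma R21 (fpp fpm fmp fmm : Matrix (Fin 3) (Fin 3) ℝ) :
    ∑ c : Fin 4, Riem fpp fpm fmp fmm 2 c 1 c = - fpp 1 2 + fpp 2 1 - fpm 1 2 - fpm 2 1 - fmp 1 2 - fmp 2 1 - fmm 1 2 + fmm 2 1 := by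
  simp [Riem, tHooft, tHooftBar, eps3, Fin.sum_univ_four, Fin.sum_univ_three,
    show ((3:Fin 4):ℕ) = 3 from rfl, show ((2:Fin 4):ℕ) = 2 from rfl,
    show ((1:Fin 4):ℕ) = 1 from rfl, show ((0:Fin 4):ℕ) = 0 from rfl,
    show ((2:Fin 3):ℕ) = 2 from rfl, show ((1:Fin 3):ℕ) = 1 from rfl,
    show ((0:Fin 3):ℕ) = 0 from rfl]
  ring

lemma R22 (fpp fpm fmp fmm : Matrix (Fin 3) (Fin 3) ℝ) :
    ∑ c : Fin 4, Riem fpp fpm fmp fmm 2 c 2 c = fpp 0 0 + fpp 1 1 + fpp 2 2 + fpm 0 0 + fpm 1 1 - fpm 2 2 + fmp 0 0 + fmp 1 1 - fmp 2 2 + fmm 0 0 + fmm 1 1 + fmm 2 2 := by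
  simp [Riem, tHooft, tHooftBar, eps3, Fin.sum_univ_four, Fin.sum_univ_three,
    show ((3:Fin 4):ℕ) = 3 from rfl, show ((2:Fin 4):ℕ) = 2 from rfl,
    show ((1:Fin 4):ℕ) = 1 from rfl, show ((0:Fin 4):ℕ) = 0 from rfl,
    show ((2:Fin 3):ℕ) = 2 from rfl, show ((1:Fin 3):ℕ) = 1 from rfl,
    show ((0:Fin 3):ℕ) = 0 from rfl]
  ring

lemma R23 (fpp fpm fmp fmm : Matrix (Fin 3) (Fin 3) ℝ) :
    ∑ c : Fin 4, Riem fpp fpm fmp fmm 2 c 3 c = fpp 0 1 - fpp 1 0 - fpm 0 1 + fpm 1 0 + fmp 0 1 - fmp 1 0 - fmm 0 1 + fmm 1 0 := by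
  simp [Riem, tHooft, tHooftBar, eps3, Fin.sum_univ_four, Fin.sum_univ_three,
    show ((3:Fin 4):ℕ) = 3 from rfl, show ((2:Fin 4):ℕ) = 2 from rfl,
    show ((1:Fin 4):ℕ) = 1 from rfl, show ((0:Fin 4):ℕ) = 0 from rfl,
    show ((2:Fin 3):ℕ) = 2 from rfl, show ((1:Fin 3):ℕ) = 1 from rfl,
    show ((0:Fin 3):ℕ) = 0 from rfl]
  ring

lemma R30 (fpp fpm fmp fmm : Matrix (Fin 3) (Fin 3) ℝ) :
    ∑ c : Fin 4, Riem fpp fpm fmp fmm 3 c 0 c = - fpp 1 2 + fpp 2 1 - fpm 1 2 + fpm 2 1 + fmp 1 2 - fmp 2 1 + fmm 1 2 - fmm 2 1 := by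
  simp [Riem, tHooft, tHooftBar, eps3, Fin.sum_univ_four, Fin.sum_univ_three,
    show ((3:Fin 4):ℕ) = 3 from rfl, show ((2:Fin 4):ℕ) = 2 from rfl,
    show ((1:Fin 4):ℕ) = 1 from rfl, show ((0:Fin 4):ℕ) = 0 from rfl,
    show ((2:Fin 3):ℕ) = 2 from rfl, show ((1:Fin 3):ℕ) = 1 from rfl,
    show ((0:Fin 3):ℕ) = 0 from rfl]
  ring

lemma R31 (fpp fpm fmp fmm : Matrix (Fin 3) (Fin 3) ℝ) :
    ∑ c : Fin 4, Riem fpp fpm fmp fmm 3 c 1 c = fpp 0 2 - fpp 2 0 + fpm 0 2 - fpm 2 0 - fmp 0 2 + fmp 2 0 - fmm 0 2 + fmm 2 0 := by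
  simp [Riem, tHooft, tHooftBar, eps3, Fin.sum_univ_four, Fin.sum_univ_three,
    show ((3:Fin 4):ℕ) = 3 from rfl, show ((2:Fin 4):ℕ) = 2 from rfl,
    show ((1:Fin 4):ℕ) = 1 from rfl, show ((0:Fin 4):ℕ) = 0 from rfl,
    show ((2:Fin 3):ℕ) = 2 from rfl, show ((1:Fin 3):ℕ) = 1 from rfl,
    show ((0:Fin 3):ℕ) = 0 from rfl]
  ring

lemma R32 (fpp fpm fmp fmm : Matrix (Fin 3) (Fin 3) ℝ) :
    ∑ c : Fin 4, Riem fpp fpm fmp fmm 3 c 2 c = - fpp 0 1 + fpp 1 0 - fpm 0 1 + fpm 1 0 + fmp 0 1 - fmp 1 0 + fmm 0 1 - fmm 1 0 := by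
  simp [Riem, tHooft, tHooftBar, eps3, Fin.sum_univ_four, Fin.sum_univ_three,
    show ((3:Fin 4):ℕ) = 3 from rfl, show ((2:Fin 4):ℕ) = 2 from rfl,
    show ((1:Fin 4):ℕ) = 1 from rfl, show ((0:Fin 4):ℕ) = 0 from rfl,
    show ((2:Fin 3):ℕ) = 2 from rfl, show ((1:Fin 3):ℕ) = 1 from rfl,
    show ((0:Fin 3):ℕ) = 0 from rfl]
  ring

lemma R33 (fpp fpm fmp fmm : Matrix (Fin 3) (Fin 3) ℝ) :
    ∑ c : Fin 4, Riem fpp fpm fmp fmm 3 c 3 c = fpp 0 0 + fpp 1 1 + fpp 2 2 - fpm 0 0 - fpm 1 1 - fpm 2 2 - fmp 0 0 - fmp 1 1 - fmp 2 2 + fmm 0 0 + fmm 1 1 + fmm 2 2 := by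
  simp [Riem, tHooft, tHooftBar, eps3, Fin.sum_univ_four, Fin.sum_univ_three,
    show ((3:Fin 4):ℕ) = 3 from rfl, show ((2:Fin 4):ℕ) = 2 from rfl,
    show ((1:Fin 4):ℕ) = 1 from rfl, show ((0:Fin 4):ℕ) = 0 from rfl,
    show ((2:Fin 3):ℕ) = 2 from rfl, show ((1:Fin 3):ℕ) = 1 from rfl,
    show ((0:Fin 3):ℕ) = 0 from rfl]
  ring

/-- Einstein condition: assuming f₊₊, f₋₋ symmetric and f₊₋ = f₋₊ᵀ, the Ricci contraction
equals λ δ_{ab} iff f₊₋ = 0 (equivalently f₋₊ = 0) and λ = trace f₊₊ + trace f₋₋. -/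
theorem einstein_iff (fpp fpm fmp fmm : Matrix (Fin 3) (Fin 3) ℝ) (lam : ℝ)
    (hpp : fpp.IsSymm) (hmm : fmm.IsSymm) (hpm : fpm = fmpᵀ) :
    (∀ a b : Fin 4,
      ∑ c : Fin 4, Riem fpp fpm fmp fmm a c b c = lam * (if a = b then 1 else 0)) ↔
    ((fpm = 0 ∧ fmp = 0) ∧ lam = fpp.trace + fmm.trace) := by
  have Hpp : ∀ i j, fpp i j = fpp j i := fun i j => hpp.apply j i
  have Hmm : ∀ i j, fmm i j = fmm j i := fun i j => hmm.apply j i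
  have Hpm : ∀ i j, fpm i j = fmp j i := by intro i j; rw [hpm]; rfl
  have htr : fpp.trace + fmm.trace
      = fpp 0 0 + fpp 1 1 + fpp 2 2 + (fmm 0 0 + fmm 1 1 + fmm 2 2) := by
    simp [Matrix.trace, Matrix.diag, Fin.sum_univ_three]
  have f3 : ∀ x : Fin 3, x = 0 ∨ x = 1 ∨ x = 2 := by decide
  have f4 : ∀ x : Fin 4, x = 0 ∨ x = 1 ∨ x = 2 ∨ x = 3 := by decide
  constructor
  · intro h
    have e00 := (R00 fpp fpm fmp fmm).symm.trans (h 0 0)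
    have e11 := (R11 fpp fpm fmp fmm).symm.trans (h 1 1)
    have e22 := (R22 fpp fpm fmp fmm).symm.trans (h 2 2)
    have e33 := (R33 fpp fpm fmp fmm).symm.trans (h 3 3)
    have e01 := (R01 fpp fpm fmp fmm).symm.trans (h 0 1)
    have e23 := (R23 fpp fpm fmp fmm).symm.trans (h 2 3)
    have e02 := (R02 fpp fpm fmp fmm).symm.trans (h 0 2)
    have e13 := (R13 fpp fpm fmp fmm).symm.trans (h 1 3)
    have e12 := (R12 fpp fpm fmp fmm).symm.trans (h 1 2)
    have e03 := (R03 fpp fpm fmp fmm).symm.trans (h 0 3)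
    norm_num [show (0:Fin 4) ≠ 1 from by decide, show (2:Fin 4) ≠ 3 from by decide,
      show (0:Fin 4) ≠ 2 from by decide, show (1:Fin 4) ≠ 3 from by decide,
      show (1:Fin 4) ≠ 2 from by decide, show (0:Fin 4) ≠ 3 from by decide]
      at e00 e11 e22 e33 e01 e23 e02 e13 e12 e03
    have p00 : fpm 0 0 = 0 := by
      linarith [e00, e11, e22, e33, Hpm 0 0, Hpm 1 1, Hpm 2 2]
    have p11 : fpm 1 1 = 0 := by
      linarith [e00, e11, e22, e33, Hpm 0 0, Hpm 1 1, Hpm 2 2]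
    have p22 : fpm 2 2 = 0 := by
      linarith [e00, e11, e22, e33, Hpm 0 0, Hpm 1 1, Hpm 2 2]
    have p01 : fpm 0 1 = 0 := by
      linarith [e01, e23, Hpp 0 1, Hmm 0 1, Hpm 0 1, Hpm 1 0]
    have p10 : fpm 1 0 = 0 := by
      linarith [e01, e23, Hpp 0 1, Hmm 0 1, Hpm 0 1, Hpm 1 0]
    have p02 : fpm 0 2 = 0 := by
      linarith [e02, e13, Hpp 0 2, Hmm 0 2, Hpm 0 2, Hpm 2 0]
    have p20 : fpm 2 0 = 0 := by
      linarith [e02, e13, Hpp 0 2, Hmm 0 2, Hpm 0 2, Hpm 2 0]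
    have p12 : fpm 1 2 = 0 := by
      linarith [e12, e03, Hpp 1 2, Hmm 1 2, Hpm 1 2, Hpm 2 1]
    have p21 : fpm 2 1 = 0 := by
      linarith [e12, e03, Hpp 1 2, Hmm 1 2, Hpm 1 2, Hpm 2 1]
    have hfpm : fpm = 0 := by
      ext i j
      rcases f3 i with rfl | rfl | rfl <;> rcases f3 j with rfl | rfl | rfl <;>
        simp only [Matrix.zero_apply] <;> assumption
    have hfmp : fmp = 0 := by
      have : fmp = fpmᵀ := by rw [hpm, Matrix.transpose_transpose]
      rw [this, hfpm, Matrix.transpose_zero]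
    refine ⟨⟨hfpm, hfmp⟩, ?_⟩
    rw [htr]
    linarith [e00, e11, e22, e33, Hpm 0 0, Hpm 1 1, Hpm 2 2]
  · rintro ⟨⟨h1, h2⟩, rfl⟩
    subst h1
    subst h2
    intro a b
    rcases f4 a with rfl | rfl | rfl | rfl <;> rcases f4 b with rfl | rfl | rfl | rfl <;>
      simp only [R00, R01, R02, R03, R10, R11, R12, R13, R20, R21, R22, R23, R30, R31,
        R32, R33, Matrix.zero_apply] <;>
      simp [htr] <;>
      linarith [Hpp 0 1, Hpp 0 2, Hpp 1 2, Hmm 0 1, Hmm 0 2, Hmm 1 2]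
end
end

section
/- For arbitrary real 3×3 matrices f₊₊, f₊₋, f₋₊, f₋₋, the Euler-density contraction of the tensor R_{abcd} satisfies Σ_{a,b,c,d,e,f,g,h=1}^{4} ε_{abcd} ε_{efgh} R_{abef} R_{cdgh} = 64 ( ‖f₊₊‖² + ‖f₋₋‖² − ‖f₊₋‖² − ‖f₋₊‖² ), where ε is the four-index Levi-Civita symbol with ε_{1234} = 1 and ‖f‖² = Σ_{i,j} (f^{ij})² denotes the squared Frobenius norm. -/
noncomputable section

open Matrix

/-!
Index the six 't Hooft forms `η^i, η̄^i` by `Fin 3 ⊕ Fin 3`. Then `R_{abcd} = Σ F_{kl} H^k_{ab} H^l_{cd}`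
with `F` the block matrix of `f₊₊, f₊₋, f₋₊, f₋₋`. The forms `H^k` are orthogonal,
`Σ_{ab} H^k_{ab} H^l_{ab} = 4 δ_{kl}`, and eigenvectors of contraction with `ε`: the `η^i` are
self-dual (eigenvalue `2`) and the `η̄^i` anti-self-dual (eigenvalue `-2`). So contracting `ε` into
a pair of indices multiplies the coefficient matrix on the right by `D = diag(2, -2)`, contracting a
pair of indices of two such tensors multiplies their coefficient matrices as `4 F Gᵀ`, and the
Euler density becomes `16 tr (F D Fᵀ D) = 64 Σ ± F_{kl}²`.
-/

open Finset

section FormTensor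

variable {R n ι κ : Type*} [CommSemiring R] [Fintype n]

def formGram (η : ι → n → n → R) (ζ : κ → n → n → R) : Matrix ι κ R :=
  of fun i j => ∑ a, ∑ b, η i a b * ζ j a b

lemma formGram_swap (η : ι → n → n → R) (ζ : κ → n → n → R) :
    formGram ζ η = (formGram η ζ)ᵀ := by
  ext i j
  simp only [formGram, of_apply, transpose_apply, mul_comm]

variable [Fintype ι] [Fintype κ]

def formTensor (η : ι → n → n → R) (ζ : κ → n → n → R) (F : Matrix ι κ R) (a b c d : n) : R :=
  ∑ i, ∑ j, F i j * η i a b * ζ j c d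

lemma sum_mul_formTensor_of_eigen [DecidableEq κ] (ε : n → n → n → n → R)
    {η : ι → n → n → R} {ζ : κ → n → n → R} {s : κ → R}
    (hζ : ∀ j e f, ∑ g, ∑ h, ε e f g h * ζ j g h = s j * ζ j e f)
    (F : Matrix ι κ R) (c d e f : n) :
    ∑ g, ∑ h, ε e f g h * formTensor η ζ F c d g h = formTensor η ζ (F * diagonal s) c d e f := by
  simp only [formTensor, mul_diagonal, mul_sum]
  simp_rw [Finset.sum_comm (γ := n) (α := ι), Finset.sum_comm (γ := n) (α := κ)]
  refine sum_congr rfl fun i _ => sum_congr rfl fun j _ => ?_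
  calc ∑ g, ∑ h, ε e f g h * (F i j * η i c d * ζ j g h)
      = F i j * η i c d * ∑ g, ∑ h, ε e f g h * ζ j g h := by
        simp only [mul_sum]
        congr! 2
        ring
    _ = F i j * s j * η i c d * ζ j e f := by
        rw [hζ]
        ring

lemma sum_formTensor_mul_formTensor {ι' κ' : Type*} [Fintype ι'] [Fintype κ']
    (η₁ : ι → n → n → R) (η₂ : κ → n → n → R) (ζ₁ : ι' → n → n → R) (ζ₂ : κ' → n → n → R)
    (F : Matrix ι κ R) (G : Matrix ι' κ' R) (a b c d : n) :
    ∑ e, ∑ f, formTensor η₁ η₂ F a b e f * formTensor ζ₁ ζ₂ G c d e f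
      = formTensor η₁ ζ₁ (F * formGram η₂ ζ₂ * Gᵀ) a b c d := by
  simp only [formTensor, formGram, mul_apply, of_apply, transpose_apply, sum_mul, mul_sum]
  simp_rw [Finset.sum_comm (γ := n) (α := ι'), Finset.sum_comm (γ := n) (α := κ'),
    Finset.sum_comm (γ := n) (α := ι), Finset.sum_comm (γ := n) (α := κ),
    Finset.sum_comm (γ := ι) (α := ι'), Finset.sum_comm (γ := ι) (α := κ')]
  congr! 6
  ring

lemma sum_formTensor_diag (η : ι → n → n → R) (ζ : κ → n → n → R) (F : Matrix ι κ R) :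
    ∑ a, ∑ b, formTensor η ζ F a b a b = trace (F * (formGram η ζ)ᵀ) := by
  simp only [formTensor, formGram, trace, diag_apply, mul_apply, transpose_apply, of_apply,
    mul_sum]
  simp_rw [Finset.sum_comm (γ := n) (α := ι), Finset.sum_comm (γ := n) (α := κ)]
  congr! 4
  ring

end FormTensor

lemma trace_mul_diagonal_mul_transpose_mul_diagonal {R ι : Type*} [CommSemiring R] [Fintype ι]
    [DecidableEq ι] (A : Matrix ι ι R) (s : ι → R) :
    trace (A * diagonal s * Aᵀ * diagonal s) = ∑ i, ∑ j, s i * s j * A i j ^ 2 := by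
  simp only [trace, diag_apply, mul_apply, diagonal_apply, mul_ite, mul_zero, sum_ite_eq',
    mem_univ, ↓reduceIte, transpose_apply, sum_mul]
  congr! 2
  ring

def tHooftForms : Fin 3 ⊕ Fin 3 → Fin 4 → Fin 4 → ℝ := Sum.elim tHooft tHooftBar

lemma Riem_eq_formTensor (fpp fpm fmp fmm : Matrix (Fin 3) (Fin 3) ℝ) :
    Riem fpp fpm fmp fmm = formTensor tHooftForms tHooftForms (fromBlocks fpp fpm fmp fmm) := by
  ext a b c d
  simp only [Riem, formTensor, Fintype.sum_sum_type, fromBlocks_apply₁₁, fromBlocks_apply₁₂,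
    fromBlocks_apply₂₁, fromBlocks_apply₂₂, tHooftForms, Sum.elim_inl, Sum.elim_inr,
    sum_add_distrib]
  ring

lemma sum_eps4_mul_tHooft (j : Fin 3) (e f : Fin 4) :
    ∑ g, ∑ h, eps4 e f g h * tHooft j g h = 2 * tHooft j e f := by
  fin_cases j <;> fin_cases e <;> fin_cases f <;>
    simp [Fin.sum_univ_four, eps4, tHooft, eps3] <;> norm_num

lemma sum_eps4_mul_tHooftBar (j : Fin 3) (e f : Fin 4) :
    ∑ g, ∑ h, eps4 e f g h * tHooftBar j g h = -2 * tHooftBar j e f := by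
  fin_cases j <;> fin_cases e <;> fin_cases f <;>
    simp [Fin.sum_univ_four, eps4, tHooftBar, eps3] <;> norm_num

lemma sum_eps4_mul_tHooftForms (k : Fin 3 ⊕ Fin 3) (e f : Fin 4) :
    ∑ g, ∑ h, eps4 e f g h * tHooftForms k g h
      = Sum.elim (fun _ => 2) (fun _ => -2) k * tHooftForms k e f := by
  rcases k with j | j
  · exact sum_eps4_mul_tHooft j e f
  · exact sum_eps4_mul_tHooftBar j e f

lemma formGram_tHooft : formGram tHooft tHooft = (4 : ℝ) • 1 := by
  ext i j
  fin_cases i <;> fin_cases j <;> simp [formGram, Fin.sum_univ_four, tHooft, eps3] <;> norm_num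

lemma formGram_tHooftBar : formGram tHooftBar tHooftBar = (4 : ℝ) • 1 := by
  ext i j
  fin_cases i <;> fin_cases j <;> simp [formGram, Fin.sum_univ_four, tHooftBar, eps3] <;> norm_num

lemma formGram_tHooft_tHooftBar : formGram tHooft tHooftBar = 0 := by
  ext i j
  fin_cases i <;> fin_cases j <;>
    simp [formGram, Fin.sum_univ_four, tHooft, tHooftBar, eps3] <;> norm_num

lemma formGram_tHooftForms : formGram tHooftForms tHooftForms = (4 : ℝ) • 1 := by
  have hblocks : formGram tHooftForms tHooftForms = fromBlocks (formGram tHooft tHooft)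
      (formGram tHooft tHooftBar) (formGram tHooftBar tHooft) (formGram tHooftBar tHooftBar) := by
    ext (i | i) (j | j) <;> rfl
  rw [hblocks, formGram_swap tHooft tHooftBar, formGram_tHooft, formGram_tHooftBar,
    formGram_tHooft_tHooftBar, transpose_zero, ← fromBlocks_one, fromBlocks_smul, smul_zero]

/-- Euler-density contraction:
Σ ε_{abcd} ε_{efgh} R_{abef} R_{cdgh} = 64 (‖f₊₊‖² + ‖f₋₋‖² − ‖f₊₋‖² − ‖f₋₊‖²). -/
theorem euler_density_contraction (fpp fpm fmp fmm : Matrix (Fin 3) (Fin 3) ℝ) :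
    ∑ a : Fin 4, ∑ b : Fin 4, ∑ c : Fin 4, ∑ d : Fin 4,
      ∑ e : Fin 4, ∑ f : Fin 4, ∑ g : Fin 4, ∑ h : Fin 4,
        eps4 a b c d * eps4 e f g h * Riem fpp fpm fmp fmm a b e f
          * Riem fpp fpm fmp fmm c d g h
    = 64 * ((∑ i : Fin 3, ∑ j : Fin 3, (fpp i j) ^ 2)
        + (∑ i : Fin 3, ∑ j : Fin 3, (fmm i j) ^ 2)
        - (∑ i : Fin 3, ∑ j : Fin 3, (fpm i j) ^ 2)
        - (∑ i : Fin 3, ∑ j : Fin 3, (fmp i j) ^ 2)) := by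
  have hdual := sum_mul_formTensor_of_eigen (η := tHooftForms) eps4 sum_eps4_mul_tHooftForms
  calc _ = ∑ a, ∑ b, ∑ c, ∑ d, eps4 a b c d * ∑ e, ∑ f, Riem fpp fpm fmp fmm a b e f *
          ∑ g, ∑ h, eps4 e f g h * Riem fpp fpm fmp fmm c d g h := by
        simp only [mul_sum]
        congr! 8
        ring
    _ = trace (fromBlocks fpp fpm fmp fmm * ((4 : ℝ) • 1)
          * (fromBlocks fpp fpm fmp fmm * diagonal (Sum.elim (fun _ => 2) (fun _ => -2)))ᵀ
          * diagonal (Sum.elim (fun _ => 2) (fun _ => -2)) * ((4 : ℝ) • 1)ᵀ) := by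
        simp only [Riem_eq_formTensor, hdual, sum_formTensor_mul_formTensor, sum_formTensor_diag,
          formGram_tHooftForms]
    _ = _ := by
        simp only [transpose_smul, transpose_one, Matrix.mul_smul, Matrix.mul_one, Matrix.smul_mul,
          trace_smul, transpose_mul, diagonal_transpose, ← Matrix.mul_assoc,
          trace_mul_diagonal_mul_transpose_mul_diagonal]
        simp only [Fintype.sum_sum_type, fromBlocks_apply₁₁, fromBlocks_apply₁₂, fromBlocks_apply₂₁,
          fromBlocks_apply₂₂, Sum.elim_inl, Sum.elim_inr, smul_eq_mul, sum_add_distrib, ← mul_sum]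
        ring
end
end

section
/- Let λ = (λ₁, λ₂, λ₃) and μ = (μ₁, μ₂, μ₃) be vectors in ℝ³ such that λ₁ ≥ 0, λ₂ ≥ 0, λ₃ ≥ 0 and μ₁ + μ₂ + μ₃ = 0. Then the Euclidean inner product satisfies λ·μ ≤ √(2/3) |λ| |μ|, where |·| denotes the Euclidean norm. -/
/-- For λ ∈ ℝ³ with nonnegative entries and μ ∈ ℝ³ with μ₁ + μ₂ + μ₃ = 0, the Euclidean
inner product satisfies λ·μ ≤ √(2/3) |λ| |μ|. -/
theorem dot_le_sqrt_two_thirds (l1 l2 l3 m1 m2 m3 : ℝ)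
    (hl1 : 0 ≤ l1) (hl2 : 0 ≤ l2) (hl3 : 0 ≤ l3) (hm : m1 + m2 + m3 = 0) :
    l1 * m1 + l2 * m2 + l3 * m3
      ≤ Real.sqrt (2 / 3) * Real.sqrt (l1 ^ 2 + l2 ^ 2 + l3 ^ 2)
          * Real.sqrt (m1 ^ 2 + m2 ^ 2 + m3 ^ 2) := by
  have hL : (0:ℝ) ≤ l1 ^ 2 + l2 ^ 2 + l3 ^ 2 := by positivity
  have hM : (0:ℝ) ≤ m1 ^ 2 + m2 ^ 2 + m3 ^ 2 := by positivity
  have hR : 0 ≤ Real.sqrt (2 / 3) * Real.sqrt (l1 ^ 2 + l2 ^ 2 + l3 ^ 2)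
      * Real.sqrt (m1 ^ 2 + m2 ^ 2 + m3 ^ 2) := by positivity
  rcases le_or_gt (l1 * m1 + l2 * m2 + l3 * m3) 0 with hD | hD
  · linarith
  · -- center λ : set aᵢ = lᵢ - s/3 with s the sum
    set s : ℝ := l1 + l2 + l3 with hs
    set a1 : ℝ := l1 - s / 3 with ha1
    set a2 : ℝ := l2 - s / 3 with ha2
    set a3 : ℝ := l3 - s / 3 with ha3
    have hDrw : l1 * m1 + l2 * m2 + l3 * m3 = a1 * m1 + a2 * m2 + a3 * m3 := by
      have : m3 = -(m1 + m2) := by linarith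
      simp [ha1, ha2, ha3, this]; ring
    -- Cauchy–Schwarz for the centered vector
    have hCS : (a1 * m1 + a2 * m2 + a3 * m3) ^ 2
        ≤ (a1 ^ 2 + a2 ^ 2 + a3 ^ 2) * (m1 ^ 2 + m2 ^ 2 + m3 ^ 2) := by
      nlinarith [sq_nonneg (a1 * m2 - a2 * m1), sq_nonneg (a1 * m3 - a3 * m1),
        sq_nonneg (a2 * m3 - a3 * m2)]
    -- norm of the centered vector is at most (2/3) of the original
    have hA : a1 ^ 2 + a2 ^ 2 + a3 ^ 2 ≤ 2 / 3 * (l1 ^ 2 + l2 ^ 2 + l3 ^ 2) := by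
      have h1 : a1 ^ 2 + a2 ^ 2 + a3 ^ 2
          = (l1 ^ 2 + l2 ^ 2 + l3 ^ 2) - s ^ 2 / 3 := by
        simp [ha1, ha2, ha3, hs]; ring
      nlinarith [mul_nonneg hl1 hl2, mul_nonneg hl2 hl3, mul_nonneg hl1 hl3]
    have key : (l1 * m1 + l2 * m2 + l3 * m3) ^ 2
        ≤ 2 / 3 * ((l1 ^ 2 + l2 ^ 2 + l3 ^ 2) * (m1 ^ 2 + m2 ^ 2 + m3 ^ 2)) := by
      rw [hDrw]
      calc (a1 * m1 + a2 * m2 + a3 * m3) ^ 2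
          ≤ (a1 ^ 2 + a2 ^ 2 + a3 ^ 2) * (m1 ^ 2 + m2 ^ 2 + m3 ^ 2) := hCS
        _ ≤ 2 / 3 * (l1 ^ 2 + l2 ^ 2 + l3 ^ 2) * (m1 ^ 2 + m2 ^ 2 + m3 ^ 2) :=
            mul_le_mul_of_nonneg_right hA hM
        _ = 2 / 3 * ((l1 ^ 2 + l2 ^ 2 + l3 ^ 2) * (m1 ^ 2 + m2 ^ 2 + m3 ^ 2)) := by ring
    calc l1 * m1 + l2 * m2 + l3 * m3
        = Real.sqrt ((l1 * m1 + l2 * m2 + l3 * m3) ^ 2) := by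
          rw [Real.sqrt_sq hD.le]
      _ ≤ Real.sqrt (2 / 3 * ((l1 ^ 2 + l2 ^ 2 + l3 ^ 2) * (m1 ^ 2 + m2 ^ 2 + m3 ^ 2))) :=
          Real.sqrt_le_sqrt key
      _ = Real.sqrt (2 / 3) * Real.sqrt (l1 ^ 2 + l2 ^ 2 + l3 ^ 2)
          * Real.sqrt (m1 ^ 2 + m2 ^ 2 + m3 ^ 2) := by
          rw [Real.sqrt_mul (by norm_num), Real.sqrt_mul hL, mul_assoc]
end

section
/- Let λ = (λ₁, λ₂, λ₃) and μ = (μ₁, μ₂, μ₃) be vectors in ℝ³ such that λ₁ ≥ 0, λ₂ ≥ 0, λ₃ ≥ 0 and μ₁ + μ₂ + μ₃ = 0. Then |λ|² + |μ|² ≥ 2 √(3/2) (λ·μ), i.e. |λ|² + |μ|² ≥ √6 (λ·μ), where |·| denotes the Euclidean norm and λ·μ the Euclidean inner product. -/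
lemma key_poly (l1 l2 l3 m1 m2 m3 : ℝ)
    (hl1 : 0 ≤ l1) (hl2 : 0 ≤ l2) (hl3 : 0 ≤ l3) (hm : m1 + m2 + m3 = 0) :
    3 * (l1 * m1 + l2 * m2 + l3 * m3) ^ 2
      ≤ 2 * (l1 ^ 2 + l2 ^ 2 + l3 ^ 2) * (m1 ^ 2 + m2 ^ 2 + m3 ^ 2) := by
  have h3 : m3 = -m1 - m2 := by linarith
  subst h3
  have hB : (0:ℝ) ≤ m1 ^ 2 + m2 ^ 2 + (-m1 - m2) ^ 2 := by positivity
  nlinarith [sq_nonneg ((2*l1-l2-l3)*m2 - (2*l2-l1-l3)*m1),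
    sq_nonneg ((2*l1-l2-l3)*(-m1-m2) - (2*l3-l1-l2)*m1),
    sq_nonneg ((2*l2-l1-l3)*(-m1-m2) - (2*l3-l1-l2)*m2),
    mul_nonneg (mul_nonneg hl1 hl2) hB,
    mul_nonneg (mul_nonneg hl1 hl3) hB,
    mul_nonneg (mul_nonneg hl2 hl3) hB]

lemma sqrt6_dot_le (l1 l2 l3 m1 m2 m3 : ℝ)
    (hl1 : 0 ≤ l1) (hl2 : 0 ≤ l2) (hl3 : 0 ≤ l3) (hm : m1 + m2 + m3 = 0) :
    Real.sqrt 6 * (l1 * m1 + l2 * m2 + l3 * m3)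
      ≤ (l1 ^ 2 + l2 ^ 2 + l3 ^ 2) + (m1 ^ 2 + m2 ^ 2 + m3 ^ 2) := by
  set D := l1 * m1 + l2 * m2 + l3 * m3 with hD
  set A := l1 ^ 2 + l2 ^ 2 + l3 ^ 2 with hA
  set B := m1 ^ 2 + m2 ^ 2 + m3 ^ 2 with hB
  have hAB : 0 ≤ A + B := by positivity
  rcases le_or_gt D 0 with h | h
  · have : Real.sqrt 6 * D ≤ 0 :=
      mul_nonpos_of_nonneg_of_nonpos (Real.sqrt_nonneg 6) h
    linarith
  · have key : 3 * D ^ 2 ≤ 2 * A * B := key_poly l1 l2 l3 m1 m2 m3 hl1 hl2 hl3 hm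
    have hsq : 6 * D ^ 2 ≤ (A + B) ^ 2 := by nlinarith [sq_nonneg (A - B)]
    have h1 : Real.sqrt 6 * D = Real.sqrt (6 * D ^ 2) := by
      rw [Real.sqrt_mul (by norm_num), Real.sqrt_sq h.le]
    rw [h1]
    calc Real.sqrt (6 * D ^ 2) ≤ Real.sqrt ((A + B) ^ 2) := Real.sqrt_le_sqrt hsq
      _ = A + B := Real.sqrt_sq hAB

/-- For λ ∈ ℝ³ with nonnegative entries and μ ∈ ℝ³ with μ₁ + μ₂ + μ₃ = 0, one has
|λ|² + |μ|² ≥ 2√(3/2) (λ·μ), i.e. |λ|² + |μ|² ≥ √6 (λ·μ). -/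
theorem sq_norms_ge_sqrt_six_dot (l1 l2 l3 m1 m2 m3 : ℝ)
    (hl1 : 0 ≤ l1) (hl2 : 0 ≤ l2) (hl3 : 0 ≤ l3) (hm : m1 + m2 + m3 = 0) :
    (l1 ^ 2 + l2 ^ 2 + l3 ^ 2) + (m1 ^ 2 + m2 ^ 2 + m3 ^ 2)
        ≥ 2 * Real.sqrt (3 / 2) * (l1 * m1 + l2 * m2 + l3 * m3)
    ∧ (l1 ^ 2 + l2 ^ 2 + l3 ^ 2) + (m1 ^ 2 + m2 ^ 2 + m3 ^ 2)
        ≥ Real.sqrt 6 * (l1 * m1 + l2 * m2 + l3 * m3) := by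
  have h6 := sqrt6_dot_le l1 l2 l3 m1 m2 m3 hl1 hl2 hl3 hm
  have heq : 2 * Real.sqrt (3 / 2) = Real.sqrt 6 := by
    have h4 : Real.sqrt 4 = 2 := by
      rw [show (4:ℝ) = 2 ^ 2 by norm_num, Real.sqrt_sq (by norm_num)]
    nth_rewrite 1 [← h4]
    rw [← Real.sqrt_mul (by norm_num : (0:ℝ) ≤ 4)]
    congr 1
    norm_num
  exact ⟨by rw [heq]; exact h6, h6⟩
end

section
/- For any real constants a₁, a₂, the function h : (0, π) → ℝ defined by h(r) = (1/sin³r)( a₁ cos r + a₂ (4 sin²r + sin⁴r − 8) ) satisfies the ODE h''(r) + h'(r) cot r + (2 − 9/sin²r) h(r) = 0 for all r ∈ (0, π). -/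
/-!
Both derivatives of `h` are again of the form (trigonometric polynomial) / sin^k r, and since
`sin` does not vanish on (0, π), `deriv h` agrees with the explicit `h'` near every point, so
`deriv (deriv h) = h''` there. Multiplying the equation by sin⁵ r turns it into a polynomial
identity in sin r and cos r that holds modulo sin² r + cos² r = 1.
-/

open Real Set Filter Topology

theorem deriv_deriv_eq_of_eventually_hasDerivAt {𝕜 F : Type*} [NontriviallyNormedField 𝕜]
    [NormedAddCommGroup F] [NormedSpace 𝕜 F] {f f' : 𝕜 → F} {f'' : F} {x : 𝕜}
    (hf : ∀ᶠ y in 𝓝 x, HasDerivAt f (f' y) y) (hf' : HasDerivAt f' f'' x) :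
    deriv (deriv f) x = f'' := by
  rw [EventuallyEq.deriv_eq (hf.mono fun _ hy => hy.deriv)]
  exact hf'.deriv

noncomputable section

namespace ExplicitH

variable (a1 a2 : ℝ)

def h (s : ℝ) : ℝ :=
  (a1 * cos s + a2 * (4 * sin s ^ 2 + sin s ^ 4 - 8)) / sin s ^ 3

def h' (s : ℝ) : ℝ :=
  (-a1 * (1 + 2 * cos s ^ 2) + a2 * cos s * (sin s ^ 4 - 4 * sin s ^ 2 + 24)) / sin s ^ 4

def h'' (s : ℝ) : ℝ :=
  (4 * a1 * cos s * (2 + cos s ^ 2) - a2 * (sin s ^ 6 + 4 * sin s ^ 4 - 80 * sin s ^ 2 + 96))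
    / sin s ^ 5

variable {a1 a2} {r : ℝ}

theorem hasDerivAt_h (hr : sin r ≠ 0) : HasDerivAt (h a1 a2) (h' a1 a2 r) r := by
  have hasDerivAt_num := ((hasDerivAt_cos r).const_mul a1).fun_add
    ((((hasDerivAt_sin r).fun_pow 2).const_mul 4).fun_add ((hasDerivAt_sin r).fun_pow 4)
      |>.sub_const 8 |>.const_mul a2)
  refine (hasDerivAt_num.fun_div ((hasDerivAt_sin r).fun_pow 3)
    (pow_ne_zero 3 hr)).congr_deriv ?_
  unfold h'
  field_simp
  linear_combination -a1 * sin r ^ 2 * sin_sq_add_cos_sq r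

theorem hasDerivAt_h' (hr : sin r ≠ 0) : HasDerivAt (h' a1 a2) (h'' a1 a2 r) r := by
  have hasDerivAt_num :=
    (((hasDerivAt_cos r).fun_pow 2).const_mul 2 |>.const_add 1 |>.const_mul (-a1)).fun_add
      (((hasDerivAt_cos r).const_mul a2).fun_mul
        (((hasDerivAt_sin r).fun_pow 4).fun_sub (((hasDerivAt_sin r).fun_pow 2).const_mul 4)
          |>.add_const 24))
  refine (hasDerivAt_num.fun_div ((hasDerivAt_sin r).fun_pow 4)
    (pow_ne_zero 4 hr)).congr_deriv ?_
  unfold h''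
  field_simp
  linear_combination
    sin r ^ 3 * (4 * a1 * cos r + a2 * (8 * sin r ^ 2 - 96)) * sin_sq_add_cos_sq r

theorem solves_ode (hr : sin r ≠ 0) :
    h'' a1 a2 r + h' a1 a2 r * cot r + (2 - 9 / sin r ^ 2) * h a1 a2 r = 0 := by
  rw [cot_eq_cos_div_sin]
  simp only [h, h', h'']
  field_simp
  linear_combination
    (2 * a1 * cos r + a2 * (sin r ^ 4 - 4 * sin r ^ 2 + 24)) * sin_sq_add_cos_sq r

end ExplicitH

end

/-- For any constants a₁, a₂, the function
h(r) = (a₁ cos r + a₂ (4 sin²r + sin⁴r − 8)) / sin³r satisfies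
h'' + h' cot r + (2 − 9/sin²r) h = 0 on (0, π). -/
theorem explicit_h_solves_ode (a1 a2 : ℝ) :
    ∀ r ∈ Ioo (0 : ℝ) π,
      deriv (deriv (fun s : ℝ =>
          (a1 * Real.cos s + a2 * (4 * Real.sin s ^ 2 + Real.sin s ^ 4 - 8))
            / Real.sin s ^ 3)) r
        + deriv (fun s : ℝ =>
            (a1 * Real.cos s + a2 * (4 * Real.sin s ^ 2 + Real.sin s ^ 4 - 8))
              / Real.sin s ^ 3) r * Real.cot r
        + (2 - 9 / Real.sin r ^ 2)
            * ((a1 * Real.cos r + a2 * (4 * Real.sin r ^ 2 + Real.sin r ^ 4 - 8))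
                / Real.sin r ^ 3) = 0 := by
  intro r hr
  have sin_ne_zero_near : ∀ᶠ s in 𝓝 r, sin s ≠ 0 :=
    eventually_of_mem (isOpen_Ioo.mem_nhds hr) fun s hs => (sin_pos_of_pos_of_lt_pi hs.1 hs.2).ne'
  have hr' : sin r ≠ 0 := sin_ne_zero_near.self_of_nhds
  have deriv_deriv_h : deriv (deriv (ExplicitH.h a1 a2)) r = ExplicitH.h'' a1 a2 r :=
    deriv_deriv_eq_of_eventually_hasDerivAt
      (sin_ne_zero_near.mono fun _ => ExplicitH.hasDerivAt_h) (ExplicitH.hasDerivAt_h' hr')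
  rw [← ExplicitH.solves_ode hr', ← deriv_deriv_h, ← (ExplicitH.hasDerivAt_h hr').deriv]
  rfl
end

section
/- Every twice differentiable function h : (0, π) → ℝ satisfying h''(r) + h'(r) cot r + (2 − 9/sin²r) h(r) = 0 for all r ∈ (0, π) is of the form h(r) = (1/sin³r)( a₁ cos r + a₂ (4 sin²r + sin⁴r − 8) ) for some real constants a₁, a₂. -/
/-!
Substituting `h = φ / sin³ r` turns the equation into `sin r φ'' = 5 cos r φ' + 4 sin r φ`, which
has the explicit solutions `cos r` and `P(r) = 4 sin² r + sin⁴ r - 8`. By Abel's identity the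
Wronskian of two solutions of the reduced equation is a constant multiple of `sin⁵ r`, and
`W(cos, P) = -3 sin⁵ r`. Hence subtracting a suitable multiple of `cos` from `φ` leaves a function
whose Wronskian with the nowhere-vanishing `P` is zero, i.e. a constant multiple of `P`.
-/

open Real Set

section Wronskian

variable {s : Set ℝ} {f f' f'' g g' g'' : ℝ → ℝ}

theorem IsOpen.exists_eq_const_of_hasDerivAt_zero (hs : IsOpen s) (hs' : IsPreconnected s)
    (hf : ∀ x ∈ s, HasDerivAt f 0 x) : ∃ c, ∀ x ∈ s, f x = c :=
  hs.exists_is_const_of_deriv_eq_zero hs'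
    (fun x hx => (hf x hx).differentiableAt.differentiableWithinAt) (fun x hx => (hf x hx).deriv)

theorem hasDerivAt_wronskian {x : ℝ} (hf : HasDerivAt f (f' x) x) (hf' : HasDerivAt f' (f'' x) x)
    (hg : HasDerivAt g (g' x) x) (hg' : HasDerivAt g' (g'' x) x) :
    HasDerivAt (fun t => f t * g' t - f' t * g t) (f x * g'' x - f'' x * g x) x :=
  ((hf.mul hg').sub (hf'.mul hg)).congr_deriv (by ring)

theorem IsOpen.exists_eq_const_mul_of_wronskian_eq_zero (hs : IsOpen s) (hs' : IsPreconnected s)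
    (hf : ∀ x ∈ s, HasDerivAt f (f' x) x) (hg : ∀ x ∈ s, HasDerivAt g (g' x) x)
    (hg0 : ∀ x ∈ s, g x ≠ 0) (hW : ∀ x ∈ s, f x * g' x - f' x * g x = 0) :
    ∃ c, ∀ x ∈ s, f x = c * g x := by
  have hquot : ∀ x ∈ s, HasDerivAt (fun t => f t / g t) 0 x := by
    intro x hx
    refine ((hf x hx).div (hg x hx) (hg0 x hx)).congr_deriv ?_
    rw [div_eq_zero_iff]
    left
    linear_combination -hW x hx
  obtain ⟨c, hc⟩ := hs.exists_eq_const_of_hasDerivAt_zero hs' hquot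
  exact ⟨c, fun x hx => by rw [← hc x hx, div_mul_cancel₀ _ (hg0 x hx)]⟩

end Wronskian

def IsReducedSolution (φ φ' φ'' : ℝ → ℝ) : Prop :=
  ∀ r ∈ Ioo 0 π, HasDerivAt φ (φ' r) r ∧ HasDerivAt φ' (φ'' r) r ∧
    sin r * φ'' r = 5 * cos r * φ' r + 4 * sin r * φ r

theorem isReducedSolution_quartic :
    IsReducedSolution (fun r => 4 * sin r ^ 2 + sin r ^ 4 - 8)
      (fun r => 8 * sin r * cos r + 4 * sin r ^ 3 * cos r)
      (fun r => 8 * cos r ^ 2 - 8 * sin r ^ 2 + 12 * sin r ^ 2 * cos r ^ 2 - 4 * sin r ^ 4) := by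
  intro r _
  have hs := hasDerivAt_sin r
  have hc := hasDerivAt_cos r
  refine ⟨?_, ?_, ?_⟩
  · exact ((((hs.fun_pow 2).const_mul 4).add (hs.fun_pow 4)).sub_const 8).congr_deriv (by ring)
  · exact (((hs.const_mul 8).mul hc).add (((hs.fun_pow 3).const_mul 4).mul hc)).congr_deriv
      (by ring)
  · linear_combination (-32 * sin r - 8 * sin r ^ 3) * sin_sq_add_cos_sq r

theorem quartic_ne_zero (r : ℝ) : 4 * sin r ^ 2 + sin r ^ 4 - 8 ≠ 0 := by
  nlinarith [sin_sq_le_one r, sq_nonneg (sin r)]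

theorem wronskian_cos_quartic (r : ℝ) :
    cos r * (8 * sin r * cos r + 4 * sin r ^ 3 * cos r) - -sin r * (4 * sin r ^ 2 + sin r ^ 4 - 8)
      = -3 * sin r ^ 5 := by
  linear_combination (8 * sin r + 4 * sin r ^ 3) * sin_sq_add_cos_sq r

theorem IsReducedSolution.exists_wronskian_eq {φ φ' φ'' ψ ψ' ψ'' : ℝ → ℝ}
    (hφ : IsReducedSolution φ φ' φ'') (hψ : IsReducedSolution ψ ψ' ψ'') :
    ∃ C, ∀ r ∈ Ioo 0 π, φ r * ψ' r - φ' r * ψ r = C * sin r ^ 5 := by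
  have hG : ∀ r ∈ Ioo 0 π, HasDerivAt (fun t => (φ t * ψ' t - φ' t * ψ t) / sin t ^ 5) 0 r := by
    intro r hr
    obtain ⟨hφ₀, hφ₁, hφe⟩ := hφ r hr
    obtain ⟨hψ₀, hψ₁, hψe⟩ := hψ r hr
    have hsin : sin r ≠ 0 := (sin_pos_of_pos_of_lt_pi hr.1 hr.2).ne'
    refine ((hasDerivAt_wronskian hφ₀ hφ₁ hψ₀ hψ₁).div ((hasDerivAt_sin r).fun_pow 5)
      (pow_ne_zero 5 hsin)).congr_deriv ?_
    rw [div_eq_zero_iff]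
    left
    linear_combination sin r ^ 4 * (φ r * hψe - ψ r * hφe)
  obtain ⟨C, hC⟩ := isOpen_Ioo.exists_eq_const_of_hasDerivAt_zero isPreconnected_Ioo hG
  refine ⟨C, fun r hr => ?_⟩
  have hsin : sin r ≠ 0 := (sin_pos_of_pos_of_lt_pi hr.1 hr.2).ne'
  rw [← hC r hr, div_mul_cancel₀ _ (pow_ne_zero 5 hsin)]

theorem isReducedSolution_mul_sin_pow_three {h : ℝ → ℝ}
    (hd : ∀ r ∈ Ioo (0 : ℝ) π, DifferentiableAt ℝ h r)
    (hd' : ∀ r ∈ Ioo (0 : ℝ) π, DifferentiableAt ℝ (deriv h) r)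
    (hode : ∀ r ∈ Ioo (0 : ℝ) π,
      deriv (deriv h) r + deriv h r * cot r + (2 - 9 / sin r ^ 2) * h r = 0) :
    IsReducedSolution (fun r => h r * sin r ^ 3)
      (fun r => deriv h r * sin r ^ 3 + h r * (3 * sin r ^ 2 * cos r))
      (fun r => deriv (deriv h) r * sin r ^ 3 + 6 * deriv h r * sin r ^ 2 * cos r
        + h r * (6 * sin r * cos r ^ 2 - 3 * sin r ^ 3)) := by
  intro r hr
  have hs := hasDerivAt_sin r
  have hs3 : HasDerivAt (fun t => sin t ^ 3) (3 * sin r ^ 2 * cos r) r := by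
    simpa using hs.fun_pow 3
  have hs2c : HasDerivAt (fun t => 3 * sin t ^ 2 * cos t)
      (6 * sin r * cos r ^ 2 - 3 * sin r ^ 3) r :=
    (((hs.fun_pow 2).const_mul 3).mul (hasDerivAt_cos r)).congr_deriv (by ring)
  have hsin : sin r ≠ 0 := (sin_pos_of_pos_of_lt_pi hr.1 hr.2).ne'
  have hode4 : deriv (deriv h) r * sin r ^ 4 + deriv h r * cos r * sin r ^ 3
      + (2 * sin r ^ 4 - 9 * sin r ^ 2) * h r = 0 := by
    have e := hode r hr
    rw [cot_eq_cos_div_sin] at e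
    field_simp at e
    linear_combination sin r ^ 2 * e
  refine ⟨(hd r hr).hasDerivAt.mul hs3, ?_, ?_⟩
  · exact (((hd' r hr).hasDerivAt.mul hs3).add ((hd r hr).hasDerivAt.mul hs2c)).congr_deriv
      (by ring)
  · linear_combination hode4 - 9 * h r * sin r ^ 2 * sin_sq_add_cos_sq r

/-- Every twice differentiable solution of h'' + h' cot r + (2 − 9/sin²r) h = 0 on (0, π)
is of the form h(r) = (a₁ cos r + a₂ (4 sin²r + sin⁴r − 8)) / sin³r. -/
theorem h_ode_general_solution (h : ℝ → ℝ)
    (hd : ∀ r ∈ Ioo (0 : ℝ) π, DifferentiableAt ℝ h r)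
    (hd' : ∀ r ∈ Ioo (0 : ℝ) π, DifferentiableAt ℝ (deriv h) r)
    (hode : ∀ r ∈ Ioo (0 : ℝ) π,
      deriv (deriv h) r + deriv h r * Real.cot r
        + (2 - 9 / Real.sin r ^ 2) * h r = 0) :
    ∃ a1 a2 : ℝ, ∀ r ∈ Ioo (0 : ℝ) π,
      h r = (a1 * Real.cos r + a2 * (4 * Real.sin r ^ 2 + Real.sin r ^ 4 - 8))
              / Real.sin r ^ 3 := by
  have hφ := isReducedSolution_mul_sin_pow_three hd hd' hode
  obtain ⟨C, hC⟩ := hφ.exists_wronskian_eq isReducedSolution_quartic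
  obtain ⟨b, hb⟩ := isOpen_Ioo.exists_eq_const_mul_of_wronskian_eq_zero isPreconnected_Ioo
    (fun r hr => (hφ r hr).1.fun_add ((hasDerivAt_cos r).const_mul (C / 3)))
    (fun r hr => (isReducedSolution_quartic r hr).1) (fun r _ => quartic_ne_zero r)
    (fun r hr => by linear_combination hC r hr + C / 3 * wronskian_cos_quartic r)
  refine ⟨-C / 3, b, fun r hr => ?_⟩
  rw [eq_div_iff (pow_ne_zero 3 (sin_pos_of_pos_of_lt_pi hr.1 hr.2).ne')]
  linear_combination hb r hr
end

section
/- Every twice differentiable function p : (0, π) → ℝ satisfying p''(r) − p(r) = 2 p'(r) cot r for all r ∈ (0, π) is of the form p(r) = c₁ cos r + c₂ (sin r − r cos r) for some real constants c₁, c₂. -/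
/-!
The functions `cos r` and `sin r - r cos r` solve `y'' = 2 cot r · y' + y` on `(0, π)`, and their
Wronskian is `sin² r`, which does not vanish there. For solutions of a linear equation
`y'' = a y' + b y` every Wronskian satisfies `W' = a W`, so the quotient of two Wronskians is
locally constant; Cramer's rule then writes any solution as a constant combination of the two.
-/

open Real Set

section SecondOrderLinearODE

variable {𝕜 : Type*} [RCLike 𝕜]

noncomputable def wronskian (f g : 𝕜 → 𝕜) (x : 𝕜) : 𝕜 := f x * deriv g x - deriv f x * g x

def SolvesSecondOrderLinearOn (a b : 𝕜 → 𝕜) (s : Set 𝕜) (f : 𝕜 → 𝕜) : Prop :=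
  ∀ x ∈ s, DifferentiableAt 𝕜 f x ∧ DifferentiableAt 𝕜 (deriv f) x ∧
    deriv (deriv f) x = a x * deriv f x + b x * f x

variable {a b : 𝕜 → 𝕜} {s : Set 𝕜} {f g u v : 𝕜 → 𝕜} {x : 𝕜}

theorem hasDerivAt_wronskian_s19 (hf : SolvesSecondOrderLinearOn a b s f)
    (hg : SolvesSecondOrderLinearOn a b s g) (hx : x ∈ s) :
    HasDerivAt (wronskian f g) (a x * wronskian f g x) x := by
  obtain ⟨hf₀, hf₁, hf₂⟩ := hf x hx
  obtain ⟨hg₀, hg₁, hg₂⟩ := hg x hx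
  have h := (hf₀.hasDerivAt.mul hg₁.hasDerivAt).sub (hf₁.hasDerivAt.mul hg₀.hasDerivAt)
  refine h.congr_deriv ?_
  rw [hf₂, hg₂, wronskian]
  ring

theorem hasDerivAt_wronskian_div_wronskian (hf : SolvesSecondOrderLinearOn a b s f)
    (hg : SolvesSecondOrderLinearOn a b s g) (hu : SolvesSecondOrderLinearOn a b s u)
    (hv : SolvesSecondOrderLinearOn a b s v) (hx : x ∈ s) (hW : wronskian u v x ≠ 0) :
    HasDerivAt (fun y ↦ wronskian f g y / wronskian u v y) 0 x := by
  refine ((hasDerivAt_wronskian_s19 hf hg hx).div (hasDerivAt_wronskian_s19 hu hv hx) hW).congr_deriv ?_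
  ring

theorem exists_eq_wronskian_div_wronskian (hs : IsOpen s) (hs' : IsPreconnected s)
    (hf : SolvesSecondOrderLinearOn a b s f) (hg : SolvesSecondOrderLinearOn a b s g)
    (hu : SolvesSecondOrderLinearOn a b s u) (hv : SolvesSecondOrderLinearOn a b s v)
    (hW : ∀ x ∈ s, wronskian u v x ≠ 0) :
    ∃ c, ∀ x ∈ s, wronskian f g x / wronskian u v x = c := by
  have h x (hx : x ∈ s) := hasDerivAt_wronskian_div_wronskian hf hg hu hv hx (hW x hx)
  exact hs.exists_is_const_of_deriv_eq_zero hs'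
    (fun x hx ↦ (h x hx).differentiableAt.differentiableWithinAt) (fun x hx ↦ (h x hx).deriv)

theorem wronskian_mul_add_wronskian_mul (f g p : 𝕜 → 𝕜) (x : 𝕜) :
    wronskian p g x * f x + wronskian f p x * g x = p x * wronskian f g x := by
  simp only [wronskian]
  ring

theorem SolvesSecondOrderLinearOn.exists_eq_linear_combination
    (hf : SolvesSecondOrderLinearOn a b s f) (hs : IsOpen s) (hs' : IsPreconnected s)
    (hu : SolvesSecondOrderLinearOn a b s u) (hv : SolvesSecondOrderLinearOn a b s v)
    (hW : ∀ x ∈ s, wronskian u v x ≠ 0) :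
    ∃ c₁ c₂ : 𝕜, ∀ x ∈ s, f x = c₁ * u x + c₂ * v x := by
  obtain ⟨c₁, hc₁⟩ := exists_eq_wronskian_div_wronskian hs hs' hf hv hu hv hW
  obtain ⟨c₂, hc₂⟩ := exists_eq_wronskian_div_wronskian hs hs' hu hf hu hv hW
  refine ⟨c₁, c₂, fun x hx ↦ ?_⟩
  rw [← hc₁ x hx, ← hc₂ x hx, div_mul_eq_mul_div, div_mul_eq_mul_div, ← add_div,
    wronskian_mul_add_wronskian_mul, mul_div_cancel_right₀ _ (hW x hx)]

end SecondOrderLinearODE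

theorem hasDerivAt_sin_sub_mul_cos (r : ℝ) :
    HasDerivAt (fun r ↦ sin r - r * cos r) (r * sin r) r := by
  refine ((hasDerivAt_sin r).sub ((hasDerivAt_id r).mul (hasDerivAt_cos r))).congr_deriv ?_
  simp

theorem deriv_sin_sub_mul_cos : deriv (fun r ↦ sin r - r * cos r) = fun r ↦ r * sin r :=
  funext fun r ↦ (hasDerivAt_sin_sub_mul_cos r).deriv

theorem solvesSecondOrderLinearOn_cos :
    SolvesSecondOrderLinearOn (fun r ↦ 2 * cot r) 1 (Ioo 0 π) cos := by
  intro r hr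
  have hsin : sin r ≠ 0 := (sin_pos_of_pos_of_lt_pi hr.1 hr.2).ne'
  refine ⟨differentiableAt_cos, by simp [deriv_cos'], ?_⟩
  rw [deriv_cos', deriv.fun_neg, Real.deriv_sin, Pi.one_apply]
  simp only [cot_eq_cos_div_sin]
  field_simp
  ring

theorem solvesSecondOrderLinearOn_sin_sub_mul_cos :
    SolvesSecondOrderLinearOn (fun r ↦ 2 * cot r) 1 (Ioo 0 π) (fun r ↦ sin r - r * cos r) := by
  intro r hr
  have hsin : sin r ≠ 0 := (sin_pos_of_pos_of_lt_pi hr.1 hr.2).ne'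
  have h₂ : HasDerivAt (fun r ↦ r * sin r) (sin r + r * cos r) r := by
    simpa using (hasDerivAt_id r).fun_mul (hasDerivAt_sin r)
  refine ⟨(hasDerivAt_sin_sub_mul_cos r).differentiableAt, ?_, ?_⟩
  · rw [deriv_sin_sub_mul_cos]
    exact h₂.differentiableAt
  · rw [deriv_sin_sub_mul_cos, h₂.deriv, Pi.one_apply]
    simp only [cot_eq_cos_div_sin]
    field_simp
    ring

theorem wronskian_cos_sin_sub_mul_cos (r : ℝ) :
    wronskian cos (fun r ↦ sin r - r * cos r) r = sin r ^ 2 := by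
  rw [wronskian, deriv_sin_sub_mul_cos, deriv_cos']
  ring

/-- Every twice differentiable solution of p'' − p = 2 p' cot r on (0, π) has the form
p(r) = c₁ cos r + c₂ (sin r − r cos r). -/
theorem p_ode_general_solution (p : ℝ → ℝ)
    (hd : ∀ r ∈ Ioo (0 : ℝ) π, DifferentiableAt ℝ p r)
    (hd' : ∀ r ∈ Ioo (0 : ℝ) π, DifferentiableAt ℝ (deriv p) r)
    (hode : ∀ r ∈ Ioo (0 : ℝ) π,
      deriv (deriv p) r - p r = 2 * deriv p r * Real.cot r) :
    ∃ c1 c2 : ℝ, ∀ r ∈ Ioo (0 : ℝ) π,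
      p r = c1 * Real.cos r + c2 * (Real.sin r - r * Real.cos r) := by
  have hp : SolvesSecondOrderLinearOn (fun r ↦ 2 * cot r) 1 (Ioo 0 π) p := fun r hr ↦
    ⟨hd r hr, hd' r hr, by simp only [Pi.one_apply]; linear_combination hode r hr⟩
  have hW : ∀ r ∈ Ioo 0 π, wronskian cos (fun r ↦ sin r - r * cos r) r ≠ 0 := fun r hr ↦ by
    rw [wronskian_cos_sin_sub_mul_cos]
    exact pow_ne_zero 2 (sin_pos_of_pos_of_lt_pi hr.1 hr.2).ne'
  exact hp.exists_eq_linear_combination isOpen_Ioo isPreconnected_Ioo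
    solvesSecondOrderLinearOn_cos solvesSecondOrderLinearOn_sin_sub_mul_cos hW
end
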